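/- If f: C → D is a morphism of Hopf heaps, each admitting Grunspan maps ϑ_C and ϑ_D, then f ∘ ϑ_C = ϑ_D ∘ f. -/

import Mathlib

open Coalgebra TensorProduct

universe u v w

/-- A Hopf heap: a coalgebra `C` together with a coalgebra map
`χ : C ⊗ C^co ⊗ C → C` (given here as a trilinear map) satisfying the heap axioms. -/
structure HopfHeap (F : Type u) (C : Type v) [Field F] [AddCommGroup C] [Module F C]
    [Coalgebra F C] where
  χ : C →ₗ[F] C →ₗ[F] C →ₗ[F] C
  counit_χ : ∀ a b c : C,
    counit (R := F) (χ a b c) = counit (R := F) a * counit (R := F) b * counit (R := F) c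
  comul_χ : ∀ (a b c : C) (ιa ιb ιc : Type v) (ra : Coalgebra.Repr.{u, v, v} F a ιa)
      (rb : Coalgebra.Repr.{u, v, v} F b ιb) (rc : Coalgebra.Repr.{u, v, v} F c ιc),
    comul (R := F) (χ a b c) =
      ∑ i ∈ ra.index, ∑ j ∈ rb.index, ∑ k ∈ rc.index,
        χ (ra.left i) (rb.right j) (rc.left k) ⊗ₜ[F] χ (ra.right i) (rb.left j) (rc.right k)
  assoc : ∀ a b c d e : C, χ (χ a b c) d e = χ a b (χ c d e)
  heap_left : ∀ (c a : C) (ι : Type v) (rc : Coalgebra.Repr.{u, v, v} F c ι),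
    ∑ i ∈ rc.index, χ (rc.left i) (rc.right i) a = counit (R := F) c • a
  heap_right : ∀ (c a : C) (ι : Type v) (rc : Coalgebra.Repr.{u, v, v} F c ι),
    ∑ i ∈ rc.index, χ a (rc.left i) (rc.right i) = counit (R := F) c • a

variable {F : Type u} {C : Type v} [Field F] [AddCommGroup C] [Module F C] [Coalgebra F C]

/-- `θ` is a Grunspan map for the Hopf heap `hh`: a coalgebra endomorphism satisfying
`[[a,b,θ c],d,e] = [a,[d,c,b],e]`. -/
def HopfHeap.IsGrunspan (hh : HopfHeap F C) (θ : C →ₗ[F] C) : Prop :=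
  (∀ c : C, counit (R := F) (θ c) = counit (R := F) c) ∧
  (∀ (c : C) (ι : Type v) (rc : Coalgebra.Repr.{u, v, v} F c ι),
    comul (R := F) (θ c) = ∑ i ∈ rc.index, θ (rc.left i) ⊗ₜ[F] θ (rc.right i)) ∧
  (∀ a b c d e : C, hh.χ (hh.χ a b (θ c)) d e = hh.χ a (hh.χ d c b) e)

/-- The right `(a,b)`-translation `τ_a^b : c ↦ [c,a,b]`. -/
def HopfHeap.tau (hh : HopfHeap F C) (a b : C) : C →ₗ[F] C where
  toFun c := hh.χ c a b
  map_add' x y := by simp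
  map_smul' r x := by simp

/-- A morphism of Hopf heaps: a coalgebra map commuting with the ternary operations. -/
structure HopfHeapHom {D : Type w} [AddCommGroup D] [Module F D] [Coalgebra F D]
    (hhC : HopfHeap F C) (hhD : HopfHeap F D) where
  f : C →ₗ[F] D
  counit_f : ∀ c : C, counit (R := F) (f c) = counit (R := F) c
  comul_f : ∀ (c : C) (ι : Type v) (rc : Coalgebra.Repr.{u, v, v} F c ι),
    comul (R := F) (f c) = ∑ i ∈ rc.index, f (rc.left i) ⊗ₜ[F] f (rc.right i)
  map_χ : ∀ a b c : C, f (hhC.χ a b c) = hhD.χ (f a) (f b) (f c)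

/-!
Unfolding `c = ∑ ε(c₁) c₂`, the heap axioms and the Grunspan identity force
`θ c = ∑ [c₁, [c₄, c₃, c₂], c₅]` for every Grunspan map `θ`. A morphism of Hopf heaps preserves
`[-,-,-]` and carries Sweedler representations of `c` to those of `f c`, so it carries this
formula for `θ_C c` to the one for `θ_D (f c)`.
-/

lemma Finset.sum_ulift_equivFin_symm {M : Type*} [AddCommMonoid M] {ι : Type*} (s : Finset ι)
    (g : ι → M) : ∑ i : ULift.{w} (Fin s.card), g (s.equivFin.symm i.down) = ∑ i ∈ s, g i := by
  rw [← Finset.sum_coe_sort s g]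
  exact Fintype.sum_equiv (Equiv.ulift.trans s.equivFin.symm) _ _ fun _ => rfl

namespace Coalgebra

variable {R : Type*} {A : Type v} [CommSemiring R] [AddCommMonoid A] [Module R A]

noncomputable def Repr.uliftFin [CoalgebraStruct R A] {a : A} {ι : Type*} (r : Repr R a ι) :
    Repr R a (ULift.{v} (Fin r.index.card)) where
  index := Finset.univ
  left i := r.left (r.index.equivFin.symm i.down)
  right i := r.right (r.index.equivFin.symm i.down)
  eq := by
    rw [← r.eq]
    exact Finset.sum_ulift_equivFin_symm r.index fun i => r.left i ⊗ₜ[R] r.right i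

lemma sum_counit_right_smul [Coalgebra R A] {a : A} {ι : Type*} (r : Repr R a ι) :
    ∑ i ∈ r.index, counit (R := R) (r.right i) • r.left i = a := by
  simpa only [map_sum, LinearEquiv.coe_coe, _root_.TensorProduct.rid_tmul, one_smul]
    using congrArg (_root_.TensorProduct.rid R A) (sum_tmul_counit_eq r)

end Coalgebra

namespace HopfHeap

variable (hh : HopfHeap F C) {θ : C →ₗ[F] C}

/- The axioms only allow index types in the universe of `C`, whereas representations pushed
forward from another coalgebra live elsewhere. -/
lemma heap_left' (c a : C) {ι : Type*} (rc : Repr F c ι) :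
    ∑ i ∈ rc.index, hh.χ (rc.left i) (rc.right i) a = counit (R := F) c • a := by
  rw [← Finset.sum_ulift_equivFin_symm rc.index fun i => hh.χ (rc.left i) (rc.right i) a]
  exact hh.heap_left c a _ rc.uliftFin

lemma heap_right' (c a : C) {ι : Type*} (rc : Repr F c ι) :
    ∑ i ∈ rc.index, hh.χ a (rc.left i) (rc.right i) = counit (R := F) c • a := by
  rw [← Finset.sum_ulift_equivFin_symm rc.index fun i => hh.χ a (rc.left i) (rc.right i)]
  exact hh.heap_right c a _ rc.uliftFin

variable {hh}

/-- In Sweedler notation, `[a, b, θ s] = ∑ [a, [s₂, s₁, b], s₃]`. -/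
lemma IsGrunspan.χ_apply_eq_sum (h : hh.IsGrunspan θ) (a b s : C) {ι₁ ι₂ : Type*}
    (rs : Repr F s ι₁) (rr : ∀ k, Repr F (rs.right k) ι₂) :
    hh.χ a b (θ s) = ∑ k ∈ rs.index, ∑ m ∈ (rr k).index,
      hh.χ a (hh.χ ((rr k).left m) (rs.left k) b) ((rr k).right m) :=
  calc hh.χ a b (θ s)
      = ∑ k ∈ rs.index, counit (R := F) (rs.right k) • hh.χ a b (θ (rs.left k)) := by
        conv_lhs => rw [← sum_counit_right_smul rs]
        simp only [map_sum, map_smul]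
    _ = ∑ k ∈ rs.index, ∑ m ∈ (rr k).index,
          hh.χ (hh.χ a b (θ (rs.left k))) ((rr k).left m) ((rr k).right m) :=
        Finset.sum_congr rfl fun k _ => (hh.heap_right' _ _ (rr k)).symm
    _ = _ := by simp only [h.2.2]

/-- The Grunspan map is determined by the heap: `θ c = ∑ [c₁, [c₄, c₃, c₂], c₅]`. -/
lemma IsGrunspan.eq_sum (h : hh.IsGrunspan θ) (c : C) {ι₁ ι₂ ι₃ ι₄ : Type*} (rc : Repr F c ι₁)
    (r₁ : ∀ i, Repr F (rc.left i) ι₂) (r₂ : ∀ i, Repr F (rc.right i) ι₃)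
    (r₃ : ∀ i k, Repr F ((r₂ i).right k) ι₄) :
    θ c = ∑ i ∈ rc.index, ∑ j ∈ (r₁ i).index, ∑ k ∈ (r₂ i).index, ∑ m ∈ (r₃ i k).index,
      hh.χ ((r₁ i).left j)
        (hh.χ ((r₃ i k).left m) ((r₂ i).left k) ((r₁ i).right j)) ((r₃ i k).right m) :=
  calc θ c
      = ∑ i ∈ rc.index, counit (R := F) (rc.left i) • θ (rc.right i) := by
        conv_lhs => rw [← sum_counit_smul rc]
        simp only [map_sum, map_smul]
    _ = ∑ i ∈ rc.index, ∑ j ∈ (r₁ i).index,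
          hh.χ ((r₁ i).left j) ((r₁ i).right j) (θ (rc.right i)) :=
        Finset.sum_congr rfl fun i _ => (hh.heap_left' _ _ (r₁ i)).symm
    _ = _ := by simp only [h.χ_apply_eq_sum _ _ _ (r₂ _) (r₃ _)]

end HopfHeap

namespace HopfHeapHom

variable {D : Type w} [AddCommGroup D] [Module F D] [Coalgebra F D]
  {hhC : HopfHeap F C} {hhD : HopfHeap F D}

@[simps]
def mapRepr (f : HopfHeapHom hhC hhD) {c : C} {ι : Type v} (r : Repr F c ι) :
    Repr F (f.f c) ι where
  index := r.index
  left := f.f ∘ r.left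
  right := f.f ∘ r.right
  eq := (f.comul_f c ι r).symm

end HopfHeapHom

/-- A morphism of Hopf heaps intertwines the Grunspan maps: `f ∘ ϑ_C = ϑ_D ∘ f`. -/
theorem hopfHeapHom_grunspan {D : Type w} [AddCommGroup D] [Module F D] [Coalgebra F D]
    (hhC : HopfHeap F C) (hhD : HopfHeap F D) (f : HopfHeapHom hhC hhD)
    (θC : C →ₗ[F] C) (θD : D →ₗ[F] D)
    (hC : hhC.IsGrunspan θC) (hD : hhD.IsGrunspan θD) :
    f.f ∘ₗ θC = θD ∘ₗ f.f := by
  ext c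
  let rc := ℛ F c
  let r₁ i := ℛ F (rc.left i)
  let r₂ i := ℛ F (rc.right i)
  let r₃ i k := ℛ F ((r₂ i).right k)
  rw [LinearMap.comp_apply, LinearMap.comp_apply, hC.eq_sum c rc r₁ r₂ r₃,
    hD.eq_sum (f.f c) (f.mapRepr rc) (fun i => f.mapRepr (r₁ i)) (fun i => f.mapRepr (r₂ i))
      fun i k => f.mapRepr (r₃ i k)]
  simp only [map_sum, f.map_χ, HopfHeapHom.mapRepr_index, HopfHeapHom.mapRepr_left,
    HopfHeapHom.mapRepr_right, Function.comp_apply]
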